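/- arXiv:1503.01815 — 4 statements merged into one kernel-verified Lean document; each statement's English description precedes it below -/
import Mathlib

section
/- If an n×n real matrix A has nonnegative diagonal entries, nonpositive off-diagonal entries, and each column sums to zero (A^T e = 0), then A admits an LU factorization A = LU without any row or column permutations, where L is unit lower triangular and U is upper triangular. -/
private lemma lu_aux : ∀ (n : ℕ) (A : Matrix (Fin n) (Fin n) ℝ),
    (∀ i j, i ≠ j → A i j ≤ 0) → (∀ j, 0 ≤ ∑ i, A i j) →
    ∃ L U : Matrix (Fin n) (Fin n) ℝ,
      (∀ i j, i < j → L i j = 0) ∧ (∀ i, L i i = 1) ∧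
      (∀ i j, j < i → U i j = 0) ∧ A = L * U := by
  intro n
  induction n with
  | zero =>
    intro A _ _
    exact ⟨1, 1, fun i => i.elim0, fun i => i.elim0, fun i => i.elim0,
      by ext i; exact i.elim0⟩
  | succ n ih =>
    intro A hoff hcol
    have hcol0 := hcol 0
    rw [Fin.sum_univ_succ] at hcol0
    have hoffcol : ∀ i : Fin n, A i.succ 0 ≤ 0 :=
      fun i => hoff _ _ (by simp [Fin.succ_ne_zero])
    have hsumoff : ∑ i : Fin n, A i.succ 0 ≤ 0 :=
      Finset.sum_nonpos fun i _ => hoffcol i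
    have ha : 0 ≤ A 0 0 := by linarith
    -- multipliers
    set l : Fin n → ℝ := fun i => if A 0 0 = 0 then 0 else A i.succ 0 / A 0 0
      with hl_def
    have hl_nonpos : ∀ i, l i ≤ 0 := by
      intro i
      by_cases h : A 0 0 = 0
      · simp [hl_def, h]
      · simp only [hl_def, if_neg h]
        exact div_nonpos_of_nonpos_of_nonneg (hoffcol i) ha
    have hla : ∀ i, l i * A 0 0 = A i.succ 0 := by
      intro i
      by_cases h : A 0 0 = 0
      · have hz : ∑ i : Fin n, A i.succ 0 = 0 := by linarith
        have := (Finset.sum_eq_zero_iff_of_nonpos (fun i _ => hoffcol i)).1 hz i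
          (Finset.mem_univ i)
        simp [hl_def, h, this]
      · simp only [hl_def, if_neg h]
        field_simp
    have hlsum : -1 ≤ ∑ i, l i := by
      by_cases h : A 0 0 = 0
      · simp [hl_def, h]
      · have hapos : 0 < A 0 0 := lt_of_le_of_ne ha (Ne.symm h)
        simp only [hl_def, if_neg h, ← Finset.sum_div]
        rw [le_div_iff₀ hapos]
        linarith
    -- Schur complement
    set S : Matrix (Fin n) (Fin n) ℝ :=
      Matrix.of fun i j => A i.succ j.succ - l i * A 0 j.succ with hS_def
    have hS : ∀ i j, S i j = A i.succ j.succ - l i * A 0 j.succ := fun i j => rfl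
    have hSoff : ∀ i j, i ≠ j → S i j ≤ 0 := by
      intro i j hij
      have h1 : A i.succ j.succ ≤ 0 := hoff _ _ (by simpa using hij)
      have h2 : A 0 j.succ ≤ 0 := hoff _ _ (Fin.succ_ne_zero j).symm
      have h3 : 0 ≤ l i * A 0 j.succ := by nlinarith [hl_nonpos i]
      rw [hS]; linarith
    have hScol : ∀ j, 0 ≤ ∑ i, S i j := by
      intro j
      have hc := hcol j.succ
      rw [Fin.sum_univ_succ] at hc
      have h2 : A 0 j.succ ≤ 0 := hoff _ _ (Fin.succ_ne_zero j).symm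
      have hss : ∑ i, S i j = (∑ i : Fin n, A i.succ j.succ) - (∑ i, l i) * A 0 j.succ :=
        calc ∑ i, S i j = ∑ i, (A i.succ j.succ - l i * A 0 j.succ) :=
              Finset.sum_congr rfl fun i _ => hS i j
          _ = _ := by rw [Finset.sum_sub_distrib, Finset.sum_mul]
      rw [hss]
      nlinarith
    obtain ⟨L', U', hL'low, hL'diag, hU'up, hA'⟩ := ih S hSoff hScol
    clear hS_def
    refine ⟨Matrix.of (Fin.cons (Fin.cons 1 (fun _ => (0:ℝ)))
        (fun i' => Fin.cons (l i') (L' i'))),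
      Matrix.of (Fin.cons (A 0) (fun i' => Fin.cons 0 (U' i'))), ?_, ?_, ?_, ?_⟩
    · intro i j hij
      rcases Fin.eq_zero_or_eq_succ i with rfl | ⟨i', rfl⟩ <;>
        rcases Fin.eq_zero_or_eq_succ j with rfl | ⟨j', rfl⟩
      · exact absurd hij (lt_irrefl _)
      · simp
      · exact absurd hij (by simp)
      · simpa using hL'low i' j' (by exact_mod_cast Fin.succ_lt_succ_iff.mp hij)
    · intro i
      rcases Fin.eq_zero_or_eq_succ i with rfl | ⟨i', rfl⟩ <;> simp [hL'diag]
    · intro i j hij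
      rcases Fin.eq_zero_or_eq_succ i with rfl | ⟨i', rfl⟩ <;>
        rcases Fin.eq_zero_or_eq_succ j with rfl | ⟨j', rfl⟩
      · exact absurd hij (lt_irrefl _)
      · exact absurd hij (by simp)
      · simp
      · simpa using hU'up i' j' (by exact_mod_cast Fin.succ_lt_succ_iff.mp hij)
    · ext i j
      rw [Matrix.mul_apply, Fin.sum_univ_succ]
      rcases Fin.eq_zero_or_eq_succ i with rfl | ⟨i', rfl⟩ <;>
        rcases Fin.eq_zero_or_eq_succ j with rfl | ⟨j', rfl⟩
      · simp
      · simp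
      · simp [hla i']
      · have hSc := congrFun (congrFun hA' i') j'
        rw [Matrix.mul_apply] at hSc
        rw [hS] at hSc
        simp only [Matrix.of_apply, Fin.cons_succ, Fin.cons_zero]
        linarith

/-- An n×n real matrix with property S_c (nonnegative diagonal,
nonpositive off-diagonal, columns summing to zero) admits an LU factorization
A = L * U with L unit lower triangular and U upper triangular. -/
theorem stmt_0 (n : ℕ) (A : Matrix (Fin n) (Fin n) ℝ)
    (hdiag : ∀ i, 0 ≤ A i i)
    (hoff : ∀ i j, i ≠ j → A i j ≤ 0)
    (hcol : ∀ j, ∑ i, A i j = 0) :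
    ∃ L U : Matrix (Fin n) (Fin n) ℝ,
      (∀ i j, i < j → L i j = 0) ∧ (∀ i, L i i = 1) ∧
      (∀ i j, j < i → U i j = 0) ∧ A = L * U :=
  lu_aux n A hoff (fun j => le_of_eq (hcol j).symm)
end

section
/- Let A be an n×n real matrix with property S_c and A_{11} ≠ 0. After one step of Gaussian elimination, the resulting (n−1)×(n−1) Schur complement matrix = A' − l u^T (where A' is the trailing submatrix, l = A_{2:n,1}/A_{11}, u^T = A_{1,2:n}) again has property S_c: nonnegative diagonal, nonpositive off-diagonal, and columns summing to zero. -/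
/-- One step of Gaussian elimination on a matrix with property S_c
(with nonzero (1,1) pivot) produces a Schur complement that again has property
S_c: nonnegative diagonal, nonpositive off-diagonal, columns summing to zero. -/
theorem stmt_2 (n : ℕ) (A : Matrix (Fin (n + 1)) (Fin (n + 1)) ℝ)
    (hdiag : ∀ i, 0 ≤ A i i)
    (hoff : ∀ i j, i ≠ j → A i j ≤ 0)
    (hcol : ∀ j, ∑ i, A i j = 0)
    (hpiv : A 0 0 ≠ 0) :
    (∀ i : Fin n, 0 ≤ A i.succ i.succ - A i.succ 0 * A 0 i.succ / A 0 0) ∧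
    (∀ i j : Fin n, i ≠ j → A i.succ j.succ - A i.succ 0 * A 0 j.succ / A 0 0 ≤ 0) ∧
    (∀ j : Fin n, ∑ i : Fin n, (A i.succ j.succ - A i.succ 0 * A 0 j.succ / A 0 0) = 0) := by
  have hpos : 0 < A 0 0 := lt_of_le_of_ne (hdiag 0) (Ne.symm hpiv)
  have hsum : ∀ c, ∑ i : Fin n, A i.succ c = - A 0 c := by
    intro c
    have := hcol c
    rw [Fin.sum_univ_succ] at this
    linarith
  refine ⟨?_, ?_, ?_⟩
  · intro i
    -- A i.succ i.succ ≥ - A 0 i.succ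
    have h1 : ∑ k : Fin n, A k.succ i.succ ≤ A i.succ i.succ := by
      have he := Finset.sum_erase_add Finset.univ (fun k : Fin n => A k.succ i.succ)
        (Finset.mem_univ i)
      have hn : ∑ k ∈ Finset.univ.erase i, A k.succ i.succ ≤ 0 :=
        Finset.sum_nonpos (fun k hk => hoff _ _
          (fun h => (Finset.mem_erase.mp hk).1 (Fin.succ_injective _ h)))
      linarith [he, hn]
    rw [hsum i.succ] at h1
    -- A i.succ 0 ≥ - A 0 0
    have h2 : ∑ k : Fin n, A k.succ 0 ≤ A i.succ 0 := by
      have he := Finset.sum_erase_add Finset.univ (fun k : Fin n => A k.succ 0)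
        (Finset.mem_univ i)
      have hn : ∑ k ∈ Finset.univ.erase i, A k.succ 0 ≤ 0 :=
        Finset.sum_nonpos (fun k _ => hoff _ _ (Fin.succ_ne_zero k))
      linarith [he, hn]
    rw [hsum 0] at h2
    have h3 : A 0 i.succ ≤ 0 := hoff _ _ (Ne.symm (Fin.succ_ne_zero i))
    have h4 : A i.succ 0 ≤ 0 := hoff _ _ (Fin.succ_ne_zero i)
    rw [sub_nonneg, div_le_iff₀ hpos]
    nlinarith
  · intro i j hij
    have h1 : A i.succ j.succ ≤ 0 :=
      hoff _ _ (fun h => hij (Fin.succ_injective _ h))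
    have h3 : A 0 j.succ ≤ 0 := hoff _ _ (Ne.symm (Fin.succ_ne_zero j))
    have h4 : A i.succ 0 ≤ 0 := hoff _ _ (Fin.succ_ne_zero i)
    have h5 : 0 ≤ A i.succ 0 * A 0 j.succ / A 0 0 :=
      div_nonneg (by nlinarith) hpos.le
    linarith
  · intro j
    rw [Finset.sum_sub_distrib, hsum j.succ]
    have : ∑ i : Fin n, A i.succ 0 * A 0 j.succ / A 0 0
        = (∑ i : Fin n, A i.succ 0) * A 0 j.succ / A 0 0 := by
      rw [← Finset.sum_div, ← Finset.sum_mul]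
    rw [this, hsum 0]
    field_simp
    ring
end

section
/- If P is an n×n doubly stochastic matrix and I − P has rank n−1, then the leading principal (n−1)×(n−1) submatrix of I − P is invertible. -/
/-- If P is doubly stochastic and I − P has rank n−1, then the
leading principal (n−1)×(n−1) submatrix of I − P is invertible. -/
theorem stmt_12 (n : ℕ) (P : Matrix (Fin (n + 1)) (Fin (n + 1)) ℝ)
    (hpos : ∀ i j, 0 ≤ P i j)
    (hrow : ∀ i, ∑ j, P i j = 1)
    (hcol : ∀ j, ∑ i, P i j = 1)
    (hrank : ((1 : Matrix (Fin (n + 1)) (Fin (n + 1)) ℝ) - P).rank = n) :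
    IsUnit (((1 : Matrix (Fin (n + 1)) (Fin (n + 1)) ℝ) - P).submatrix
      Fin.castSucc Fin.castSucc) := by
  set A : Matrix (Fin (n + 1)) (Fin (n + 1)) ℝ := 1 - P with hA
  -- the all-ones vector
  set e : Fin (n + 1) → ℝ := fun _ => 1 with he
  have he0 : e ≠ 0 := by
    intro h
    have := congrFun h 0
    simp [he] at this
  have hAe : A.mulVec e = 0 := by
    funext i
    simp only [hA, Matrix.mulVec, dotProduct, Matrix.sub_apply, Matrix.one_apply, he,
      mul_one, sub_mul, Finset.sum_sub_distrib, hrow i]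
    simp [Finset.sum_ite_eq]
  have hcolA : ∀ j, ∑ i, A i j = 0 := by
    intro j
    simp only [hA, Matrix.sub_apply, Finset.sum_sub_distrib, hcol j, Matrix.one_apply]
    simp [Finset.sum_ite_eq]
  -- kernel of A has dimension 1
  have hker : Module.finrank ℝ (LinearMap.ker A.mulVecLin) = 1 := by
    have h1 := LinearMap.finrank_range_add_finrank_ker A.mulVecLin
    have h2 : Module.finrank ℝ (LinearMap.range A.mulVecLin) = n := by
      rw [← Matrix.rank]; exact hrank
    have h3 : Module.finrank ℝ (Fin (n + 1) → ℝ) = n + 1 := by simp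
    omega
  have hespan : Submodule.span ℝ {e} = LinearMap.ker A.mulVecLin := by
    apply Submodule.eq_of_le_of_finrank_eq
    · rw [Submodule.span_le, Set.singleton_subset_iff]
      simpa [LinearMap.mem_ker, Matrix.mulVecLin_apply] using hAe
    · rw [hker, finrank_span_singleton he0]
  rw [Matrix.isUnit_iff_isUnit_det, isUnit_iff_ne_zero]
  intro hdet
  obtain ⟨v, hv0, hv⟩ := (Matrix.exists_mulVec_eq_zero_iff).mpr hdet
  set y : Fin (n + 1) → ℝ := Fin.snoc v 0 with hy
  have hcast : ∀ k : Fin n, (A.mulVec y) k.castSucc = 0 := by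
    intro k
    have := congrFun hv k
    simp only [Matrix.mulVec, dotProduct, Matrix.submatrix_apply] at this ⊢
    rw [Fin.sum_univ_castSucc]
    simp only [hy, Fin.snoc_castSucc, Fin.snoc_last, mul_zero, add_zero]
    exact this
  have hlast : (A.mulVec y) (Fin.last n) = 0 := by
    have hsum : ∑ i, (A.mulVec y) i = 0 := by
      simp only [Matrix.mulVec, dotProduct]
      rw [Finset.sum_comm]
      simp [← Finset.sum_mul, hcolA]
    rw [Fin.sum_univ_castSucc] at hsum
    simpa [Finset.sum_congr rfl fun k _ => hcast k] using hsum
  have hAy : A.mulVec y = 0 := by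
    funext i
    induction i using Fin.lastCases with
    | last => exact hlast
    | cast k => exact hcast k
  have hymem : y ∈ Submodule.span ℝ ({e} : Set (Fin (n + 1) → ℝ)) := by
    rw [hespan]
    simpa [LinearMap.mem_ker, Matrix.mulVecLin_apply] using hAy
  obtain ⟨c, hc⟩ := Submodule.mem_span_singleton.mp hymem
  have hc0 : c = 0 := by
    have := congrFun hc (Fin.last n)
    simp [hy, he, Fin.snoc_last] at this
    linarith [this]
  apply hv0
  funext k
  have := congrFun hc k.castSucc
  simp [hy, he, hc0, Fin.snoc_castSucc] at this
  simpa using this.symm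
end

section
/- If P is an n×n matrix with nonnegative entries and rows summing to 1 (row-stochastic), and Gaussian elimination without pivoting is performed on A = I − P^T, then at every stage the pivot is the entry of largest magnitude in its column among the remaining rows; i.e., |Â_{i1}| ≤ Â_{11} for all i, where Â is any intermediate Schur complement. -/
lemma key {m : ℕ} (A : Matrix (Fin m) (Fin m) ℝ)
    (hoff : ∀ i j, i ≠ j → A i j ≤ 0) (hcol : ∀ j, ∑ i, A i j = 0) :
    ∀ i j, |A i j| ≤ A j j := by
  have hdiag : ∀ j, A j j = ∑ i ∈ Finset.univ.erase j, (-A i j) := by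
    intro j
    have h := hcol j
    rw [← Finset.add_sum_erase _ _ (Finset.mem_univ j)] at h
    rw [Finset.sum_neg_distrib]
    linarith
  have hnn : ∀ j, ∀ i ∈ Finset.univ.erase j, 0 ≤ -A i j := by
    intro j i hi
    have := hoff i j (Finset.ne_of_mem_erase hi)
    linarith
  intro i j
  rcases eq_or_ne i j with rfl | h
  · have h0 : 0 ≤ A i i := by
      rw [hdiag i]; exact Finset.sum_nonneg (hnn i)
    rw [abs_of_nonneg h0]
  · rw [abs_of_nonpos (hoff i j h), hdiag j]
    exact Finset.single_le_sum (hnn j) (Finset.mem_erase.mpr ⟨h, Finset.mem_univ i⟩)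

/-- For P row-stochastic, A = I − Pᵀ has property S_c, and in
Gaussian elimination without pivoting on A each pivot dominates its column in
magnitude: |A i j| ≤ A j j for all i, j, and this column dominance also holds
for the Schur complement after one elimination step (so it holds at every
stage). -/
theorem stmt_17 (n : ℕ) (P : Matrix (Fin (n + 1)) (Fin (n + 1)) ℝ)
    (hpos : ∀ i j, 0 ≤ P i j)
    (hrow : ∀ i, ∑ j, P i j = 1) :
    let A : Matrix (Fin (n + 1)) (Fin (n + 1)) ℝ := 1 - P.transpose
    (∀ i j, |A i j| ≤ A j j) ∧
    (A 0 0 ≠ 0 → ∀ i j : Fin n,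
      |A i.succ j.succ - A i.succ 0 * A 0 j.succ / A 0 0| ≤
        A j.succ j.succ - A j.succ 0 * A 0 j.succ / A 0 0) := by
  intro A
  have hA : ∀ i j, A i j = (if i = j then (1:ℝ) else 0) - P j i := by
    intro i j
    simp [A, Matrix.sub_apply, Matrix.one_apply, Matrix.transpose_apply]
  have hoff : ∀ i j, i ≠ j → A i j ≤ 0 := by
    intro i j h
    rw [hA, if_neg h]
    have := hpos j i; linarith
  have hcol : ∀ j, ∑ i, A i j = 0 := by
    intro j
    simp only [hA]
    rw [Finset.sum_sub_distrib, Finset.sum_ite_eq' Finset.univ j (fun _ => (1:ℝ)),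
      if_pos (Finset.mem_univ j), hrow j]
    ring
  have h1 := key A hoff hcol
  refine ⟨h1, fun h00 i j => ?_⟩
  have h00pos : 0 < A 0 0 :=
    (le_trans (abs_nonneg _) (h1 0 0)).lt_of_ne (Ne.symm h00)
  set B : Matrix (Fin n) (Fin n) ℝ :=
    fun i j => A i.succ j.succ - A i.succ 0 * A 0 j.succ / A 0 0 with hB
  have hoffB : ∀ i j, i ≠ j → B i j ≤ 0 := by
    intro i j h
    have h1' : A i.succ j.succ ≤ 0 := hoff _ _ (by simpa using h)
    have h2 : A i.succ 0 ≤ 0 := hoff _ _ (Fin.succ_ne_zero i)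
    have h3 : A 0 j.succ ≤ 0 := hoff _ _ (Fin.succ_ne_zero j).symm
    have h4' : 0 ≤ A i.succ 0 * A 0 j.succ := by nlinarith
    have h4 : 0 ≤ A i.succ 0 * A 0 j.succ / A 0 0 := div_nonneg h4' h00pos.le
    simp only [hB]; linarith
  have hcolB : ∀ j, ∑ i, B i j = 0 := by
    intro j
    simp only [hB]
    rw [Finset.sum_sub_distrib]
    have e1 : ∑ i : Fin n, A i.succ j.succ = -A 0 j.succ := by
      have := hcol j.succ
      rw [Fin.sum_univ_succ] at this; linarith
    have e2 : ∑ i : Fin n, A i.succ 0 * A 0 j.succ / A 0 0 =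
        (∑ i : Fin n, A i.succ 0) * A 0 j.succ / A 0 0 := by
      rw [Finset.sum_mul, Finset.sum_div]
    have e3 : ∑ i : Fin n, A i.succ 0 = -A 0 0 := by
      have := hcol 0
      rw [Fin.sum_univ_succ] at this; linarith
    rw [e1, e2, e3]
    field_simp
    ring
  exact key B hoffB hcolB i j
end
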